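/- arXiv:1506.05645 — 2 statements merged into one kernel-verified Lean document; each statement's English description precedes it below -/
import Mathlib

section
/- Let $k$ be a field of characteristic $p$, $A = \frac{1}{f_A}\tilde{A}$ with $f_A \in k[x]$ nonzero and $\tilde{A} \in M_r(k[x])$, and $d = \max(\deg f_A, \deg \tilde{A})$. Define $A_1 = -A$ and $A_{i+1} = A_i' - A A_i$. Then the entries of the matrix $f_A^p \cdot A_p$ are polynomials of degree at most $dp$. -/
/-! Writing `A = Ã / f` and `A_n = P_n / f ^ n`, the recursion `A_{n+1} = A_n' - A A_n` becomes
`P_{n+1} = f P_n' - n f' P_n - Ã P_n` on numerators, which raises degrees by at most `d`. -/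

open Polynomial

/-- The standard derivation `d/dx` on the field of rational functions `k(x)`. -/
noncomputable def RatFunc.deriv {k : Type*} [Field k] (f : RatFunc k) : RatFunc k :=
  algebraMap (Polynomial k) (RatFunc k)
      (derivative f.num * f.denom - f.num * derivative f.denom) /
    algebraMap (Polynomial k) (RatFunc k) (f.denom ^ 2)

namespace RatFunc

variable {k : Type*} [Field k]

local notation "φ" => algebraMap k[X] (RatFunc k)

/-- The quotient rule: `deriv` does not depend on the chosen representation `a / b`. -/
theorem deriv_div (a b : k[X]) (hb : b ≠ 0) :
    deriv (φ a / φ b) = φ (derivative a * b - a * derivative b) / φ (b ^ 2) := by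
  set f : RatFunc k := φ a / φ b
  have hcross : a * f.denom = f.num * b := by
    apply algebraMap_injective k
    have h := f.num_div_denom
    rw [div_eq_div_iff (algebraMap_ne_zero f.denom_ne_zero) (algebraMap_ne_zero hb)] at h
    simpa [map_mul] using h.symm
  have hcross' : derivative a * f.denom + a * derivative f.denom =
      derivative f.num * b + f.num * derivative b := by
    simpa [derivative_mul] using congrArg derivative hcross
  rw [deriv, div_eq_div_iff (algebraMap_ne_zero (pow_ne_zero 2 f.denom_ne_zero))
    (algebraMap_ne_zero (pow_ne_zero 2 hb)), ← map_mul, ← map_mul]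
  congr 1
  linear_combination (derivative f.denom * b + derivative b * f.denom) * hcross -
    (b * f.denom) * hcross'

theorem deriv_div_pow (a f : k[X]) (hf : f ≠ 0) (n : ℕ) :
    deriv (φ a / φ (f ^ n)) =
      φ (f * derivative a - Polynomial.C (n : k) * derivative f * a) / φ (f ^ (n + 1)) := by
  rw [deriv_div _ _ (pow_ne_zero n hf), div_eq_div_iff
    (algebraMap_ne_zero (pow_ne_zero 2 (pow_ne_zero n hf)))
    (algebraMap_ne_zero (pow_ne_zero (n + 1) hf)), ← map_mul, ← map_mul]
  congr 1
  cases n with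
  | zero => simp only [pow_zero, derivative_one, Nat.cast_zero, map_zero]; ring
  | succ m => rw [derivative_pow_succ]; push_cast; ring

end RatFunc

section Numerators

variable {k : Type*} [Field k] {ι : Type*} [Fintype ι]

local notation "φ" => algebraMap k[X] (RatFunc k)

noncomputable def nextNumerator (f : k[X]) (At : Matrix ι ι k[X]) (n : ℕ)
    (P : Matrix ι ι k[X]) : Matrix ι ι k[X] :=
  f • P.map derivative - (C (n : k) * derivative f) • P - At * P

theorem map_deriv_sub_mul_apply {f : k[X]} (hf : f ≠ 0) {At : Matrix ι ι k[X]}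
    {A : Matrix ι ι (RatFunc k)} (hA : ∀ i j, A i j = φ (At i j) / φ f)
    {n : ℕ} {P : Matrix ι ι k[X]} {M : Matrix ι ι (RatFunc k)}
    (hM : ∀ i j, M i j = φ (P i j) / φ (f ^ n)) (i j : ι) :
    (M.map RatFunc.deriv - A * M) i j = φ (nextNumerator f At n P i j) / φ (f ^ (n + 1)) := by
  have hprod : (A * M) i j = φ ((At * P) i j) / φ (f ^ (n + 1)) := by
    simp only [Matrix.mul_apply, hA, hM, map_sum, Finset.sum_div]
    refine Finset.sum_congr rfl fun l _ => ?_
    rw [div_mul_div_comm, ← map_mul, ← map_mul, ← pow_succ']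
  rw [Matrix.sub_apply, Matrix.map_apply, hM, RatFunc.deriv_div_pow _ _ hf, hprod, ← sub_div,
    ← map_sub]
  simp only [nextNumerator, Matrix.sub_apply, Matrix.smul_apply, Matrix.map_apply, smul_eq_mul]

theorem natDegree_nextNumerator_le {f : k[X]} {d : ℕ} (hf : f.natDegree ≤ d)
    {At : Matrix ι ι k[X]} (hAt : ∀ i j, (At i j).natDegree ≤ d) (n : ℕ)
    {P : Matrix ι ι k[X]} {e : ℕ} (hP : ∀ i j, (P i j).natDegree ≤ e) (i j : ι) :
    (nextNumerator f At n P i j).natDegree ≤ e + d := by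
  have hderiv {g : k[X]} {m : ℕ} (hg : g.natDegree ≤ m) : (derivative g).natDegree ≤ m :=
    (natDegree_derivative_le g).trans (Nat.sub_le_of_le_add (Nat.le_add_right_of_le hg))
  have hleft : (f * derivative (P i j)).natDegree ≤ e + d := by
    rw [add_comm]; exact natDegree_mul_le_of_le hf (hderiv (hP i j))
  have hmid : (C (n : k) * derivative f * P i j).natDegree ≤ e + d := by
    rw [add_comm, mul_assoc]
    exact (natDegree_C_mul_le _ _).trans (natDegree_mul_le_of_le (hderiv hf) (hP i j))
  have hprod : ((At * P) i j).natDegree ≤ e + d :=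
    natDegree_sum_le_of_forall_le _ _ fun l _ => by
      rw [add_comm]; exact natDegree_mul_le_of_le (hAt i l) (hP l j)
  simp only [nextNumerator, Matrix.sub_apply, Matrix.smul_apply, Matrix.map_apply, smul_eq_mul]
  exact (natDegree_sub_le _ _).trans
    (max_le ((natDegree_sub_le _ _).trans (max_le hleft hmid)) hprod)

theorem exists_numerator_natDegree_le {f : k[X]} (hf : f ≠ 0) {d : ℕ} (hfd : f.natDegree ≤ d)
    {At : Matrix ι ι k[X]} (hAt : ∀ i j, (At i j).natDegree ≤ d)
    {A : Matrix ι ι (RatFunc k)} (hA : ∀ i j, A i j = φ (At i j) / φ f)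
    {Aseq : ℕ → Matrix ι ι (RatFunc k)} (h1 : Aseq 1 = -A)
    (hrec : ∀ i, 1 ≤ i → Aseq (i + 1) = (Aseq i).map RatFunc.deriv - A * Aseq i)
    {n : ℕ} (hn : 1 ≤ n) :
    ∃ P : Matrix ι ι k[X], (∀ i j, (P i j).natDegree ≤ d * n) ∧
      ∀ i j, Aseq n i j = φ (P i j) / φ (f ^ n) := by
  induction n, hn using Nat.le_induction with
  | base =>
    refine ⟨-At, fun i j => by simpa using hAt i j, fun i j => ?_⟩
    simp [h1, hA, neg_div]
  | succ n hn ih =>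
    obtain ⟨P, hPd, hP⟩ := ih
    refine ⟨nextNumerator f At n P, fun i j => ?_, fun i j => ?_⟩
    · rw [mul_add_one]; exact natDegree_nextNumerator_le hfd hAt n hPd i j
    · rw [hrec n hn]; exact map_deriv_sub_mul_apply hf hA hP i j

end Numerators

theorem pCurvature_degree_bound_general {p : ℕ} (hp : p.Prime) {k : Type*} [Field k]
    {r : ℕ} (fA : Polynomial k) (hfA : fA ≠ 0) (At : Matrix (Fin r) (Fin r) (Polynomial k))
    (d : ℕ) (hd : fA.natDegree ≤ d) (hAt : ∀ i j, (At i j).natDegree ≤ d)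
    (A : Matrix (Fin r) (Fin r) (RatFunc k))
    (hA : ∀ i j, A i j = algebraMap (Polynomial k) (RatFunc k) (At i j) /
        algebraMap (Polynomial k) (RatFunc k) fA)
    (Aseq : ℕ → Matrix (Fin r) (Fin r) (RatFunc k))
    (h1 : Aseq 1 = -A)
    (hrec : ∀ i, 1 ≤ i → Aseq (i + 1) = (Aseq i).map RatFunc.deriv - A * Aseq i) :
    ∀ i j, ∃ P : Polynomial k, P.natDegree ≤ d * p ∧
      algebraMap (Polynomial k) (RatFunc k) (fA ^ p) * Aseq p i j =
        algebraMap (Polynomial k) (RatFunc k) P := by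
  obtain ⟨P, hPd, hP⟩ :=
    exists_numerator_natDegree_le hfA hd hAt hA h1 hrec hp.one_lt.le
  intro i j
  refine ⟨P i j, hPd i j, ?_⟩
  rw [hP, mul_div_cancel₀ _ (RatFunc.algebraMap_ne_zero (pow_ne_zero p hfA))]

/-- let `A = (1/f_A)·Ã` with `f_A ∈ k[x]` nonzero and `Ã` a matrix of
polynomials, and `d` bounding `deg f_A` and the degrees of the entries of `Ã`.
With `A₁ = -A`, `A_{i+1} = A_i' - A·A_i`, the entries of `f_A^p · A_p` are
polynomials of degree at most `d·p`. -/
theorem pCurvature_degree_bound {p : ℕ} (hp : p.Prime) {k : Type*} [Field k] [CharP k p]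
    {r : ℕ} (fA : Polynomial k) (hfA : fA ≠ 0) (At : Matrix (Fin r) (Fin r) (Polynomial k))
    (d : ℕ) (hd : fA.natDegree ≤ d) (hAt : ∀ i j, (At i j).natDegree ≤ d)
    (A : Matrix (Fin r) (Fin r) (RatFunc k))
    (hA : ∀ i j, A i j = algebraMap (Polynomial k) (RatFunc k) (At i j) /
        algebraMap (Polynomial k) (RatFunc k) fA)
    (Aseq : ℕ → Matrix (Fin r) (Fin r) (RatFunc k))
    (h1 : Aseq 1 = -A)
    (hrec : ∀ i, 1 ≤ i → Aseq (i + 1) = (Aseq i).map RatFunc.deriv - A * Aseq i) :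
    ∀ i j, ∃ P : Polynomial k, P.natDegree ≤ d * p ∧
      algebraMap (Polynomial k) (RatFunc k) (fA ^ p) * Aseq p i j =
        algebraMap (Polynomial k) (RatFunc k) P :=
  pCurvature_degree_bound_general hp fA hfA At d hd hAt A hA Aseq h1 hrec
end

section
/- Let $k$ be a field of characteristic $p$, $\ell = k[x]/S$ with $S \in k[x]$ separable, and $a \in \ell$ the class of $x$. The ring homomorphism $\varphi_S : k[x] \to \ell[t]/t^p$, $f(x) \mapsto f(t + a) \bmod t^p$, is surjective with kernel the ideal generated by $S^p$; hence it induces a ring isomorphism $k[x]/S^p \xrightarrow{\sim} \ell[t]/t^p$. Moreover $\varphi_S$ commutes with derivations, where $k[x]$ carries $d/dx$ and $\ell[t]/t^p$ the derivation $d/dt$ (with elements of $\ell$ regarded as constants). -/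
/-!
Write `ℓ = k[x]/(S)`, `a` for the class of `x` and `t` for the class of `X` in `ℓ[t]/(tⁿ)`.
Since `S(a) = 0`, `φ_S(S) = S(t + a)` is divisible by `t`, so `φ_S` kills `Sⁿ` and factors through
`k[x]/(Sⁿ)`. Separability makes `S'` invertible modulo `S`, so Newton's method produces a root `b`
of `S` in `k[x]/(Sⁿ)` with `b ≡ x` modulo `S`; then `a ↦ b`, `t ↦ x - b` defines a map back.
It is inverse to `φ_S` because `φ_S(b)` and `a` are roots of `S` in `ℓ[t]/(tⁿ)` that differ by a
nilpotent, and `S'(a)` is a unit, so `φ_S(b) = a`.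
-/

open Polynomial

namespace Polynomial

variable {R A : Type*} [CommRing R] [CommRing A] [Algebra R A] {P : R[X]}

theorem Separable.isUnit_aeval_derivative_of_aeval_eq_zero (hP : P.Separable) {x : A}
    (hx : aeval x P = 0) : IsUnit (aeval x (derivative P)) := by
  obtain ⟨u, v, huv⟩ := hP
  refine IsUnit.of_mul_eq_one_right (aeval x v) ?_
  simpa [hx] using congrArg (aeval x) huv

theorem Separable.exists_dvd_sub_and_sq_dvd_aeval (hP : P.Separable) (x : A) :
    ∃ y, aeval x P ∣ y - x ∧ aeval x P ^ 2 ∣ aeval y P := by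
  obtain ⟨u, v, huv⟩ := hP
  have hx : aeval x u * aeval x P + aeval x v * aeval x (derivative P) = 1 := by
    simpa using congrArg (aeval x) huv
  obtain ⟨c, hc⟩ := binomExpansion (P.map (algebraMap R A)) x (-(aeval x P * aeval x v))
  simp only [eval_map_algebraMap, derivative_map] at hc
  -- the Newton step: `v(x)` inverts `P'(x)` modulo `P(x)`
  refine ⟨x + -(aeval x P * aeval x v), by simp, ⟨aeval x u + c * aeval x v ^ 2, ?_⟩⟩
  rw [hc]
  linear_combination -aeval x P * hx

theorem Separable.exists_dvd_sub_and_pow_dvd_aeval (hP : P.Separable) (x₀ : A) (n : ℕ) :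
    ∃ x, aeval x₀ P ∣ x - x₀ ∧ aeval x₀ P ^ n ∣ aeval x P := by
  induction n with
  | zero => exact ⟨x₀, by simp, by simp⟩
  | succ n ih =>
    obtain ⟨x, hxx₀, hx⟩ := ih
    obtain ⟨y, hyx, hy⟩ := hP.exists_dvd_sub_and_sq_dvd_aeval x
    have hx₀x : aeval x₀ P ∣ aeval x P := by
      have := sub_dvd_eval_sub x x₀ (P.map (algebraMap R A))
      simp only [eval_map_algebraMap] at this
      simpa using dvd_add (hxx₀.trans this) (dvd_refl (aeval x₀ P))
    refine ⟨y, by simpa using dvd_add (hx₀x.trans hyx) hxx₀, ?_⟩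
    rw [pow_succ]
    exact (mul_dvd_mul hx hx₀x).trans (sq (aeval x P) ▸ hy)

theorem eq_of_aeval_eq_zero_of_isNilpotent_sub {x r : A} (hx : aeval x P = 0)
    (hx' : IsUnit (aeval x (derivative P))) (hr : aeval r P = 0) (hxr : IsNilpotent (x - r)) :
    r = x :=
  (existsUnique_nilpotent_sub_and_aeval_eq_zero (hx ▸ IsNilpotent.zero) hx').unique
    ⟨hxr, hr⟩ ⟨by simp, hx⟩

theorem derivative_aeval_X_add_C (a : A) (f : R[X]) :
    derivative (aeval (X + C a) f) = aeval (X + C a) (derivative f) := by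
  rw [← aeval_map_algebraMap A, ← comp_eq_aeval, derivative_comp, derivative_map,
    derivative_X_add_C, one_mul, comp_eq_aeval, aeval_map_algebraMap]

end Polynomial

open AdjoinRoot

section PhiS

variable {R : Type*} [CommRing R] (S : R[X]) (n : ℕ)

/-- `φ_S f = f(t + a)`, with `ℓ[t]/(tⁿ)` taken as `AdjoinRoot (X ^ n)` over `ℓ = AdjoinRoot S`. -/
noncomputable def phiS : R[X] →ₐ[R] AdjoinRoot (X ^ n : (AdjoinRoot S)[X]) :=
  (Ideal.Quotient.mkₐ R _).comp (aeval (X + C (root S)))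

theorem phiS_apply (f : R[X]) : phiS S n f = mk _ (aeval (X + C (root S)) f) := rfl

theorem phiS_X : phiS S n X = root _ + of _ (root S) := by
  simp [phiS_apply, mk_X, mk_C]

theorem phiS_pow_self : phiS S n (S ^ n) = 0 := by
  have hX : X ∣ aeval (X + C (root S)) S := by
    rw [X_dvd_iff, ← aeval_map_algebraMap (AdjoinRoot S), ← comp_eq_aeval, ← taylor_apply,
      taylor_coeff_zero, eval_map_algebraMap, aeval_eq, mk_self]
  rw [phiS_apply, map_pow, mk_eq_zero]
  exact pow_dvd_pow_of_dvd hX n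

noncomputable def phiSLift : AdjoinRoot (S ^ n) →ₐ[R] AdjoinRoot (X ^ n : (AdjoinRoot S)[X]) :=
  liftAlgHom (S ^ n) (Algebra.ofId R _) (phiS S n X) <| by
    rw [Algebra.toRingHom_ofId, ← aeval_def, aeval_algHom_apply, aeval_X_left_apply,
      phiS_pow_self]

theorem phiSLift_mk (f : R[X]) : phiSLift S n (mk _ f) = phiS S n f := by
  rw [phiSLift, liftAlgHom_mk, Algebra.toRingHom_ofId, ← aeval_def, aeval_algHom_apply,
    aeval_X_left_apply]

theorem phiSLift_root : phiSLift S n (root _) = root _ + of _ (root S) := by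
  rw [phiSLift, liftAlgHom_root, phiS_X]

theorem isNilpotent_root_X_pow : IsNilpotent (root (X ^ n : (AdjoinRoot S)[X])) :=
  ⟨n, by rw [← mk_X, ← map_pow, mk_self]⟩

theorem phiSLift_eq_of_aeval_eq_zero (hS : S.Separable) {b : AdjoinRoot (S ^ n)}
    (hb : aeval b S = 0) (hbX : mk _ S ∣ b - root _) : phiSLift S n b = of _ (root S) := by
  have ha : aeval (of (X ^ n : (AdjoinRoot S)[X]) (root S)) S = 0 := by
    rw [← AdjoinRoot.algebraMap_eq, aeval_algebraMap_apply, aeval_eq, mk_self, map_zero]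
  refine eq_of_aeval_eq_zero_of_isNilpotent_sub ha
    (hS.isUnit_aeval_derivative_of_aeval_eq_zero ha) (by rw [aeval_algHom_apply, hb, map_zero]) ?_
  obtain ⟨c, hc⟩ := hbX
  have hS_nil : IsNilpotent (phiS S n S) := ⟨n, by rw [← map_pow, phiS_pow_self]⟩
  have : of _ (root S) - phiSLift S n b = -(root _ + phiS S n S * phiSLift S n c) := by
    rw [eq_add_of_sub_eq' hc, map_add, map_mul, phiSLift_root, phiSLift_mk]
    ring
  rw [this, isNilpotent_neg_iff]
  exact (Commute.all _ _).isNilpotent_add (isNilpotent_root_X_pow S n)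
    ((Commute.all _ _).isNilpotent_mul_right hS_nil)

theorem phiSLift_bijective (hS : S.Separable) : Function.Bijective (phiSLift S n) := by
  obtain ⟨b, hbX, hb⟩ := hS.exists_dvd_sub_and_pow_dvd_aeval (root (S ^ n)) n
  rw [aeval_eq, ← map_pow, mk_self, zero_dvd_iff] at hb
  rw [aeval_eq] at hbX
  have hXb : (root (S ^ n) - b) ^ n = 0 := by
    obtain ⟨c, hc⟩ := hbX
    rw [← neg_sub, hc, neg_pow, mul_pow, ← map_pow, mk_self, zero_mul, mul_zero]
  let L : AdjoinRoot S →ₐ[R] AdjoinRoot (S ^ n) :=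
    liftAlgHom S (Algebra.ofId R _) b (by rwa [Algebra.toRingHom_ofId, ← aeval_def])
  let ψ : AdjoinRoot (X ^ n : (AdjoinRoot S)[X]) →ₐ[R] AdjoinRoot (S ^ n) :=
    liftAlgHom _ L (root _ - b) (by rwa [eval₂_X_pow])
  have hbS := phiSLift_eq_of_aeval_eq_zero S n hS hb hbX
  refine (AlgEquiv.ofAlgHom (phiSLift S n) ψ ?_ ?_).bijective
  · ext
    · simp [ψ, L, hbS]
    · simp [ψ, phiSLift_root, hbS]
  · ext
    simp [ψ, L, phiSLift_root]

theorem phiS_surjective (hS : S.Separable) : Function.Surjective (phiS S n) := by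
  have : ⇑(phiS S n) = phiSLift S n ∘ mk _ := funext fun f => (phiSLift_mk S n f).symm
  exact this ▸ (phiSLift_bijective S n hS).surjective.comp mk_surjective

theorem ker_phiS (hS : S.Separable) : RingHom.ker (phiS S n) = Ideal.span {S ^ n} := by
  ext f
  rw [RingHom.mem_ker, ← phiSLift_mk, map_eq_zero_iff _ (phiSLift_bijective S n hS).injective,
    mk_eq_zero, Ideal.mem_span_singleton]

end PhiS

theorem phiS_surjective_ker_and_deriv_general {p : ℕ} {k : Type*} [Field k]
    (S : Polynomial k) (hS : S.Separable) :
    letI ℓ := Polynomial k ⧸ Ideal.span {S}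
    letI : CommRing ℓ := Ideal.Quotient.commRing _
    letI a : ℓ := Ideal.Quotient.mk (Ideal.span {S}) X
    letI φ₀ : Polynomial k →+* Polynomial ℓ :=
      (aeval (X + C a : Polynomial ℓ) : Polynomial k →ₐ[k] Polynomial ℓ).toRingHom
    letI J : Ideal (Polynomial ℓ) := Ideal.span {(X : Polynomial ℓ) ^ p}
    letI Φ : Polynomial k →+* (Polynomial ℓ ⧸ J) := (Ideal.Quotient.mk J).comp φ₀
    Function.Surjective Φ ∧
      RingHom.ker Φ = Ideal.span {S ^ p} ∧
      (∃ e : (Polynomial k ⧸ Ideal.span {S ^ p}) ≃+* (Polynomial ℓ ⧸ J),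
        ∀ f : Polynomial k, e (Ideal.Quotient.mk _ f) = Φ f) ∧
      (∀ f : Polynomial k, Φ (derivative f) = Ideal.Quotient.mk J (derivative (φ₀ f))) :=
  ⟨phiS_surjective S p hS, ker_phiS S p hS,
    ⟨(AlgEquiv.ofBijective _ (phiSLift_bijective S p hS)).toRingEquiv, phiSLift_mk S p⟩,
    fun f => congrArg (mk _) (derivative_aeval_X_add_C _ f).symm⟩

/-- let `k` be a field of characteristic `p`, `S ∈ k[x]` separable,
`ℓ = k[x]/S`, `a ∈ ℓ` the class of `x`, and `φ_S : k[x] → ℓ[t]/t^p`,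
`f(x) ↦ f(t+a) mod t^p`.  Then `φ_S` is surjective with kernel `(S^p)`, hence
induces a ring isomorphism `k[x]/S^p ≃ ℓ[t]/t^p`; moreover `φ_S` commutes with the
derivations (`d/dx` on `k[x]`, and the one induced by `d/dt` on `ℓ[t]/t^p`). -/
theorem phiS_surjective_ker_and_deriv {p : ℕ} (hp : p.Prime) {k : Type*} [Field k]
    [CharP k p] (S : Polynomial k) (hS : S.Separable) :
    letI ℓ := Polynomial k ⧸ Ideal.span {S}
    letI : CommRing ℓ := Ideal.Quotient.commRing _
    letI a : ℓ := Ideal.Quotient.mk (Ideal.span {S}) X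
    letI φ₀ : Polynomial k →+* Polynomial ℓ :=
      (aeval (X + C a : Polynomial ℓ) : Polynomial k →ₐ[k] Polynomial ℓ).toRingHom
    letI J : Ideal (Polynomial ℓ) := Ideal.span {(X : Polynomial ℓ) ^ p}
    letI Φ : Polynomial k →+* (Polynomial ℓ ⧸ J) := (Ideal.Quotient.mk J).comp φ₀
    Function.Surjective Φ ∧
      RingHom.ker Φ = Ideal.span {S ^ p} ∧
      (∃ e : (Polynomial k ⧸ Ideal.span {S ^ p}) ≃+* (Polynomial ℓ ⧸ J),
        ∀ f : Polynomial k, e (Ideal.Quotient.mk _ f) = Φ f) ∧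
      (∀ f : Polynomial k, Φ (derivative f) = Ideal.Quotient.mk J (derivative (φ₀ f))) :=
  phiS_surjective_ker_and_deriv_general S hS
end
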